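/- Unconditional boundedness and non-negativity of the implicit system scheme: let ψ be a saturation with saturation level α. Suppose ρ^n, ρ^{n+1} satisfy the implicit system scheme relations with no-flux boundary conditions. If ρ_i^n ≥ 0 entrywise and σ_i^n ≤ α for all 1 ≤ i ≤ M, then ρ_i^{n+1} ≥ 0 entrywise and σ_i^{n+1} ≤ α for all 1 ≤ i ≤ M, with no restriction on Δt. -/

import Mathlib

/-- A *saturation* with saturation level `α > 0`: a continuous non-increasing function
`ψ : [0,∞) → ℝ` with `ψ α = 0` and `(α − s)·ψ s > 0` for every `s ≥ 0`, `s ≠ α`. -/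
def IsSaturation (ψ : ℝ → ℝ) (α : ℝ) : Prop :=
  0 < α ∧ ContinuousOn ψ (Set.Ici 0) ∧
    (∀ s₁ s₂, 0 ≤ s₁ → s₁ ≤ s₂ → ψ s₂ ≤ ψ s₁) ∧
    ψ α = 0 ∧ ∀ s, 0 ≤ s → s ≠ α → 0 < (α - s) * ψ s

/-- Abel-type summation by parts for telescoping sums against weights. -/
lemma abel_sum_aux (c f : ℕ → ℝ) (M : ℕ) :
    ∑ i ∈ Finset.range M, c (i+1) * (f (i+1) - f i)
      = c (M+1) * f M - c 1 * f 0
        + ∑ i ∈ Finset.range M, (c (i+1) - c (i+2)) * f (i+1) := by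
  induction M with
  | zero => simp
  | succ n ih =>
    rw [Finset.sum_range_succ, ih, Finset.sum_range_succ]
    ring_nf
    ring_nf at *

/-- Unconditional boundedness and non-negativity of the implicit system scheme with
no-flux boundary conditions: `u i p` denotes `(u_{i+1/2})_p` and `F i p` denotes
`(F_{i+1/2})_p` (so `F 0 = F_{1/2}` and `F M = F_{M+1/2}`); the saturation is evaluated
on the total densities `σ_i^{n+1} = Σ_p (ρ_i^{n+1})_p`. -/
theorem implicit_system_bound_preservation
    (ψ : ℝ → ℝ) (α : ℝ) (hψ : IsSaturation ψ α)
    (Δx Δt : ℝ) (hΔx : 0 < Δx) (hΔt : 0 < Δt)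
    (P M : ℕ) (hM : 1 ≤ M)
    (u ρn ρn1 F : ℕ → Fin P → ℝ)
    (hF0 : ∀ p, F 0 p = 0) (hFM : ∀ p, F M p = 0)
    (hFdef : ∀ i, 1 ≤ i → i + 1 ≤ M → ∀ p,
      F i p = ρn1 i p * max (ψ (∑ q, ρn1 (i + 1) q)) 0 * max (u i p) 0 +
        ρn1 (i + 1) p * max (ψ (∑ q, ρn1 i q)) 0 * min (u i p) 0)
    (hscheme : ∀ i, 1 ≤ i → i ≤ M → ∀ p,
      ρn1 i p = ρn i p - Δt / Δx * (F i p - F (i - 1) p))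
    (hρn : ∀ i, 1 ≤ i → i ≤ M → (∀ p, 0 ≤ ρn i p) ∧ (∑ p, ρn i p) ≤ α) :
    ∀ i, 1 ≤ i → i ≤ M → (∀ p, 0 ≤ ρn1 i p) ∧ (∑ p, ρn1 i p) ≤ α := by
  classical
  obtain ⟨hα, -, hmono, hψα, -⟩ := hψ
  have hlam : 0 < Δt / Δx := div_pos hΔt hΔx
  -- Step 1: non-negativity of ρⁿ⁺¹.
  have hnn : ∀ i, 1 ≤ i → i ≤ M → ∀ p, 0 ≤ ρn1 i p := by
    intro i hi1 hiM p
    by_contra hneg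
    push_neg at hneg
    set c : ℕ → ℝ := fun j => if j ≤ M ∧ ρn1 j p < 0 then 1 else 0 with hcdef
    have hc_nonneg : ∀ j, 0 ≤ c j := by
      intro j; simp only [hcdef]; split <;> norm_num
    -- term-wise sign for the Abel sum
    have key : ∀ j ∈ Finset.range M, (c (j+1) - c (j+2)) * F (j+1) p ≤ 0 := by
      intro j hj
      simp only [Finset.mem_range] at hj
      rcases eq_or_lt_of_le (show j + 1 ≤ M by omega) with hjM | hjM
      · have hFz : F (j+1) p = 0 := by rw [hjM]; exact hFM p
        rw [hFz]; simp
      · have hj1 : 1 ≤ j + 1 := Nat.le_add_left 1 j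
        have hj2 : j + 1 + 1 ≤ M := hjM
        have hFj := hFdef (j+1) hj1 hj2 p
        have hjle : j + 1 ≤ M := Nat.le_of_lt hjM
        have hj2le : j + 2 ≤ M := hjM
        have e1 : c (j+1) = if ρn1 (j+1) p < 0 then 1 else 0 := by
          simp only [hcdef]
          by_cases h : ρn1 (j+1) p < 0 <;> simp [h, hjle]
        have e2 : c (j+2) = if ρn1 (j+2) p < 0 then 1 else 0 := by
          simp only [hcdef]
          by_cases h : ρn1 (j+2) p < 0 <;> simp [h, hj2le]
        have haux1 : (0:ℝ) ≤ max (ψ (∑ q, ρn1 (j+1+1) q)) 0 := le_max_right _ _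
        have haux2 : (0:ℝ) ≤ max (ψ (∑ q, ρn1 (j+1) q)) 0 := le_max_right _ _
        have haux3 : (0:ℝ) ≤ max (u (j+1) p) 0 := le_max_right _ _
        have haux4 : min (u (j+1) p) 0 ≤ 0 := min_le_right _ _
        have hj21 : j + 1 + 1 = j + 2 := rfl
        by_cases h1 : ρn1 (j+1) p < 0 <;> by_cases h2 : ρn1 (j+2) p < 0
        · rw [e1, e2, if_pos h1, if_pos h2]; norm_num
        · -- F (j+1) p ≤ 0
          have h2' : 0 ≤ ρn1 (j+1+1) p := by rw [hj21]; exact not_lt.mp h2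
          have t1 : ρn1 (j+1) p * max (ψ (∑ q, ρn1 (j+1+1) q)) 0 * max (u (j+1) p) 0 ≤ 0 :=
            mul_nonpos_of_nonpos_of_nonneg
              (mul_nonpos_of_nonpos_of_nonneg h1.le haux1) haux3
          have t2 : ρn1 (j+1+1) p * max (ψ (∑ q, ρn1 (j+1) q)) 0 * min (u (j+1) p) 0 ≤ 0 :=
            mul_nonpos_of_nonneg_of_nonpos (mul_nonneg h2' haux2) haux4
          have hFle : F (j+1) p ≤ 0 := by rw [hFj]; linarith
          rw [e1, e2, if_pos h1, if_neg h2]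
          linarith
        · -- 0 ≤ F (j+1) p
          have h1' : 0 ≤ ρn1 (j+1) p := not_lt.mp h1
          have h2' : ρn1 (j+1+1) p ≤ 0 := by rw [hj21]; exact h2.le
          have t1 : 0 ≤ ρn1 (j+1) p * max (ψ (∑ q, ρn1 (j+1+1) q)) 0 * max (u (j+1) p) 0 :=
            mul_nonneg (mul_nonneg h1' haux1) haux3
          have t2 : 0 ≤ ρn1 (j+1+1) p * max (ψ (∑ q, ρn1 (j+1) q)) 0 * min (u (j+1) p) 0 := by
            have hx : ρn1 (j+1+1) p * max (ψ (∑ q, ρn1 (j+1) q)) 0 ≤ 0 :=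
              mul_nonpos_of_nonpos_of_nonneg h2' haux2
            have hy := mul_nonneg (neg_nonneg.mpr hx) (neg_nonneg.mpr haux4)
            nlinarith [hy]
          have hFge : 0 ≤ F (j+1) p := by rw [hFj]; linarith
          rw [e1, e2, if_neg h1, if_pos h2]
          linarith
        · rw [e1, e2, if_neg h1, if_neg h2]; norm_num
    -- the telescoped sum is nonpositive
    have habel := abel_sum_aux c (fun j => F j p) M
    have hT : ∑ i ∈ Finset.range M, c (i+1) * (F (i+1) p - F i p) ≤ 0 := by
      rw [habel, hF0 p, hFM p]
      have := Finset.sum_nonpos key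
      linarith
    -- the scheme identity summed against the weights
    have hAB : ∑ i ∈ Finset.range M, c (i+1) * ρn1 (i+1) p
        = ∑ i ∈ Finset.range M, c (i+1) * ρn (i+1) p
          - Δt / Δx * ∑ i ∈ Finset.range M, c (i+1) * (F (i+1) p - F i p) := by
      rw [Finset.mul_sum, ← Finset.sum_sub_distrib]
      refine Finset.sum_congr rfl fun k hk => ?_
      have hk1 : 1 ≤ k + 1 := Nat.le_add_left 1 k
      have hkM : k + 1 ≤ M := Nat.succ_le_of_lt (Finset.mem_range.mp hk)
      have hs := hscheme (k+1) hk1 hkM p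
      simp only [Nat.add_sub_cancel] at hs
      rw [hs]; ring
    have hB : 0 ≤ ∑ i ∈ Finset.range M, c (i+1) * ρn (i+1) p := by
      refine Finset.sum_nonneg fun k hk => ?_
      have hkM : k + 1 ≤ M := Nat.succ_le_of_lt (Finset.mem_range.mp hk)
      exact mul_nonneg (hc_nonneg _) ((hρn (k+1) (Nat.le_add_left 1 k) hkM).1 p)
    have hApos : 0 ≤ ∑ i ∈ Finset.range M, c (i+1) * ρn1 (i+1) p := by
      rw [hAB]
      linarith [mul_nonpos_of_nonneg_of_nonpos hlam.le hT]
    -- but the sum is strictly negative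
    have hterm_nonpos : ∀ k ∈ Finset.range M, c (k+1) * ρn1 (k+1) p ≤ 0 := by
      intro k hk
      simp only [hcdef]
      split
      · next h => linarith [h.2]
      · norm_num
    have hmem : i - 1 ∈ Finset.range M := Finset.mem_range.mpr (by omega)
    have hsplit := Finset.add_sum_erase (Finset.range M)
      (fun k => c (k+1) * ρn1 (k+1) p) hmem
    have hi11 : i - 1 + 1 = i := by omega
    have hci : c i = 1 := by simp only [hcdef]; rw [if_pos ⟨hiM, hneg⟩]
    have hAneg : ∑ k ∈ Finset.range M, c (k+1) * ρn1 (k+1) p < 0 := by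
      rw [← hsplit]
      have h1 : c (i - 1 + 1) * ρn1 (i - 1 + 1) p < 0 := by
        rw [hi11, hci]; linarith
      have h2 : ∑ k ∈ (Finset.range M).erase (i-1), c (k+1) * ρn1 (k+1) p ≤ 0 :=
        Finset.sum_nonpos fun k hk => hterm_nonpos k (Finset.mem_of_mem_erase hk)
      linarith
    linarith
  -- Step 2: the total densities stay below α.
  have hσ : ∀ i, 1 ≤ i → i ≤ M → (∑ p, ρn1 i p) ≤ α := by
    intro i hi1 hiM
    by_contra hneg
    push_neg at hneg
    set G : ℕ → ℝ := fun j => ∑ p, F j p with hGdef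
    set c : ℕ → ℝ := fun j => if j ≤ M ∧ α < ∑ p, ρn1 j p then 1 else 0 with hcdef
    have hc_nonneg : ∀ j, 0 ≤ c j := by
      intro j; simp only [hcdef]; split <;> norm_num
    have hG0 : G 0 = 0 := by simp [hGdef, hF0]
    have hGM : G M = 0 := by simp [hGdef, hFM]
    have hψnp : ∀ s, α < s → max (ψ s) 0 = 0 := by
      intro s hs
      have : ψ s ≤ 0 := hψα ▸ hmono α s hα.le hs.le
      exact max_eq_right this
    have key : ∀ j ∈ Finset.range M, 0 ≤ (c (j+1) - c (j+2)) * G (j+1) := by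
      intro j hj
      simp only [Finset.mem_range] at hj
      rcases eq_or_lt_of_le (show j + 1 ≤ M by omega) with hjM | hjM
      · have hGz : G (j+1) = 0 := by rw [hjM]; exact hGM
        rw [hGz]; simp
      · have hj1 : 1 ≤ j + 1 := Nat.le_add_left 1 j
        have hj2 : j + 1 + 1 ≤ M := hjM
        have hjle : j + 1 ≤ M := Nat.le_of_lt hjM
        have hj2le : j + 2 ≤ M := hjM
        have hj21 : j + 1 + 1 = j + 2 := rfl
        have e1 : c (j+1) = if α < ∑ p, ρn1 (j+1) p then 1 else 0 := by
          simp only [hcdef]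
          by_cases h : α < ∑ p, ρn1 (j+1) p <;> simp [h, hjle]
        have e2 : c (j+2) = if α < ∑ p, ρn1 (j+2) p then 1 else 0 := by
          simp only [hcdef]
          by_cases h : α < ∑ p, ρn1 (j+2) p <;> simp [h, hj2le]
        by_cases h1 : α < ∑ p, ρn1 (j+1) p <;> by_cases h2 : α < ∑ p, ρn1 (j+2) p
        · rw [e1, e2, if_pos h1, if_pos h2]; norm_num
        · -- 0 ≤ G (j+1)
          have hκ : max (ψ (∑ q, ρn1 (j+1) q)) 0 = 0 := hψnp _ h1
          have hGge : 0 ≤ G (j+1) := by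
            refine Finset.sum_nonneg fun p _ => ?_
            rw [hFdef (j+1) hj1 hj2 p, hκ]
            have := mul_nonneg (mul_nonneg (hnn (j+1) hj1 hjle p)
              (le_max_right (ψ (∑ q, ρn1 (j+1+1) q)) 0)) (le_max_right (u (j+1) p) 0)
            linarith
          rw [e1, e2, if_pos h1, if_neg h2]
          linarith
        · -- G (j+1) ≤ 0
          have hκ : max (ψ (∑ q, ρn1 (j+1+1) q)) 0 = 0 := by rw [hj21]; exact hψnp _ h2
          have hGle : G (j+1) ≤ 0 := by
            refine Finset.sum_nonpos fun p _ => ?_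
            rw [hFdef (j+1) hj1 hj2 p, hκ]
            have hρ2 : 0 ≤ ρn1 (j+1+1) p := by
              rw [hj21]; exact hnn (j+2) (by omega) hj2le p
            have := mul_nonpos_of_nonneg_of_nonpos
              (mul_nonneg hρ2 (le_max_right (ψ (∑ q, ρn1 (j+1) q)) 0))
              (min_le_right (u (j+1) p) 0)
            linarith
          rw [e1, e2, if_neg h1, if_pos h2]
          linarith
        · rw [e1, e2, if_neg h1, if_neg h2]; norm_num
    have habel := abel_sum_aux c G M
    have hT : 0 ≤ ∑ i ∈ Finset.range M, c (i+1) * (G (i+1) - G i) := by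
      rw [habel, hG0, hGM]
      have := Finset.sum_nonneg key
      linarith
    have hAB : ∑ i ∈ Finset.range M, c (i+1) * ((∑ p, ρn1 (i+1) p) - α)
        = ∑ i ∈ Finset.range M, c (i+1) * ((∑ p, ρn (i+1) p) - α)
          - Δt / Δx * ∑ i ∈ Finset.range M, c (i+1) * (G (i+1) - G i) := by
      rw [Finset.mul_sum, ← Finset.sum_sub_distrib]
      refine Finset.sum_congr rfl fun k hk => ?_
      have hk1 : 1 ≤ k + 1 := Nat.le_add_left 1 k
      have hkM : k + 1 ≤ M := Nat.succ_le_of_lt (Finset.mem_range.mp hk)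
      have hs : ∑ p, ρn1 (k+1) p = ∑ p, ρn (k+1) p - Δt / Δx * (G (k+1) - G k) := by
        have hper : ∀ p : Fin P, ρn1 (k+1) p = ρn (k+1) p - Δt / Δx * (F (k+1) p - F k p) := by
          intro p
          have hs0 := hscheme (k+1) hk1 hkM p
          simpa only [Nat.add_sub_cancel] using hs0
        rw [Finset.sum_congr rfl fun p _ => hper p]
        simp only [hGdef, Finset.sum_sub_distrib, ← Finset.mul_sum]
      rw [hs]; ring
    have hB : ∑ i ∈ Finset.range M, c (i+1) * ((∑ p, ρn (i+1) p) - α) ≤ 0 := by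
      refine Finset.sum_nonpos fun k hk => ?_
      have hkM : k + 1 ≤ M := Nat.succ_le_of_lt (Finset.mem_range.mp hk)
      have := (hρn (k+1) (Nat.le_add_left 1 k) hkM).2
      exact mul_nonpos_of_nonneg_of_nonpos (hc_nonneg _) (by linarith)
    have hAle : ∑ i ∈ Finset.range M, c (i+1) * ((∑ p, ρn1 (i+1) p) - α) ≤ 0 := by
      rw [hAB]
      linarith [mul_nonneg hlam.le hT]
    have hterm_nonneg : ∀ k ∈ Finset.range M, 0 ≤ c (k+1) * ((∑ p, ρn1 (k+1) p) - α) := by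
      intro k hk
      simp only [hcdef]
      split
      · next h => linarith [h.2]
      · norm_num
    have hmem : i - 1 ∈ Finset.range M := Finset.mem_range.mpr (by omega)
    have hsplit := Finset.add_sum_erase (Finset.range M)
      (fun k => c (k+1) * ((∑ p, ρn1 (k+1) p) - α)) hmem
    have hi11 : i - 1 + 1 = i := by omega
    have hci : c i = 1 := by simp only [hcdef]; rw [if_pos ⟨hiM, hneg⟩]
    have hAgt : 0 < ∑ k ∈ Finset.range M, c (k+1) * ((∑ p, ρn1 (k+1) p) - α) := by
      rw [← hsplit]
      have h1 : 0 < c (i - 1 + 1) * ((∑ p, ρn1 (i - 1 + 1) p) - α) := by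
        rw [hi11, hci]; linarith
      have h2 : 0 ≤ ∑ k ∈ (Finset.range M).erase (i-1),
          c (k+1) * ((∑ p, ρn1 (k+1) p) - α) :=
        Finset.sum_nonneg fun k hk => hterm_nonneg k (Finset.mem_of_mem_erase hk)
      linarith
    linarith
  exact fun i h1 h2 => ⟨hnn i h1 h2, hσ i h1 h2⟩
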